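/- Let p ∈ C be continuous, u0 ∈ C, α(τ) = Σ_{i≥0} (u0 * p^{*(i)})(τ), and let u(x,τ) = u0(x+τ) + ∫_0^τ p(x+τ−s) α(s) ds be the strong solution. Then for every complex q with Re q > 0 and every τ ≥ 0, the spatial Laplace transform û(q,τ) = ∫_0^∞ e^{-qx} u(x,τ) dx satisfies û(q,τ) = e^{qτ} û0(q) + (p̂(q) − 1) ∫_0^τ e^{q(τ−s)} α(s) ds. -/

import Mathlib

open MeasureTheory Set Filter Topology

/-- The class `𝒞` of positive, `C¹`, integrable probability densities on
`ℝ₊ = [0,∞)` vanishing at infinity. -/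
def MemC (f : ℝ → ℝ) : Prop :=
  ContDiffOn ℝ 1 f (Set.Ici 0) ∧ MeasureTheory.IntegrableOn f (Set.Ici 0) ∧
    (∀ x ∈ Set.Ici (0 : ℝ), 0 < f x) ∧ (∫ x in Set.Ici (0 : ℝ), f x) = 1 ∧
    Filter.Tendsto f Filter.atTop (nhds 0)

/-- `renewalTerm p u0 i = u0 * p^{*(i)}`, the `i`-fold convolution of the
holding time density `p` with the initial density `u0` (convention
`u0 * p^{*(0)} = u0`), where `(f * g)(τ) = ∫_0^τ f(τ-s) g(s) ds`. -/
noncomputable def renewalTerm (p u0 : ℝ → ℝ) : ℕ → ℝ → ℝ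
  | 0 => u0
  | (i + 1) => fun τ => ∫ s in (0 : ℝ)..τ, p (τ - s) * renewalTerm p u0 i s

/-- The renewal density `α(τ) = Σ_{i≥0} (u0 * p^{*(i)})(τ)`. -/
noncomputable def renewalDensity (p u0 : ℝ → ℝ) (τ : ℝ) : ℝ :=
  ∑' i : ℕ, renewalTerm p u0 i τ

/-- A strong solution of the Kolmogorov forward equation for residual times:
`u ∈ C¹(ℝ₊ × ℝ₊; ℝ₊)`, `u(·,0) ∈ 𝒞`, and
`∂_τ u(x,τ) − ∂_x u(x,τ) = p(x) u(0,τ)` for all `x, τ ≥ 0`. -/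
def IsStrongSolution (p : ℝ → ℝ) (u : ℝ → ℝ → ℝ) : Prop :=
  ContDiffOn ℝ 1 (fun z : ℝ × ℝ => u z.1 z.2) (Set.Ici 0 ×ˢ Set.Ici 0) ∧
  (∀ x ∈ Set.Ici (0 : ℝ), ∀ τ ∈ Set.Ici (0 : ℝ), 0 ≤ u x τ) ∧
  MemC (fun x => u x 0) ∧
  (∀ x ∈ Set.Ici (0 : ℝ), ∀ τ ∈ Set.Ici (0 : ℝ),
    derivWithin (fun t => u x t) (Set.Ici 0) τ
      - derivWithin (fun y => u y τ) (Set.Ici 0) x = p x * u 0 τ)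


/-- The Laplace transform `f̂(q) = ∫_0^∞ e^{-qx} f(x) dx` of a function on
`ℝ₊ = [0,∞)`, for complex `q`. -/
noncomputable def laplaceFn (f : ℝ → ℝ) (q : ℂ) : ℂ :=
  ∫ x in Set.Ici (0 : ℝ), Complex.exp (-q * (x : ℂ)) * (f x : ℂ)

/-!
Only the values of `p` and `u0` on `[0, ∞)` enter, so both are first extended to continuous
functions on `ℝ` by `x ↦ f (max x 0)`.

The series defining `α` is dominated on `[0, T]` by `M (C T)^i / i!`, so integrating it termwise
gives the renewal equation `α = u0 + p * α`.

Write `u(·, τ) = u0(· + τ) + W` with `W` the convolution term. Shifting by `a ≥ 0` turns a Laplace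
transform into `e^{qa}` times the full transform minus the transform truncated to `[0, a]`.
Applied to `u0(· + τ)` and, after Fubini, to each `p(· + τ - s)` in `W`, this gives
`e^{qτ} û0 + p̂ ∫_0^τ e^{q(τ-s)} α(s) ds` minus truncated terms. By Fubini on the triangle
`0 ≤ s ≤ t ≤ τ` the truncated terms add up to `e^{qτ}` times the truncated transform of
`u0 + p * α = α`, which is `∫_0^τ e^{q(τ-s)} α(s) ds`.
-/

open scoped Nat

theorem renewalTerm_congr {p p' u0 u0' : ℝ → ℝ} (hp : EqOn p p' (Ici 0))
    (hu : EqOn u0 u0' (Ici 0)) (i : ℕ) :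
    EqOn (renewalTerm p u0 i) (renewalTerm p' u0' i) (Ici 0) := by
  induction i with
  | zero => exact hu
  | succ i ih =>
    intro τ hτ
    refine intervalIntegral.integral_congr fun s hs => ?_
    rw [uIcc_of_le hτ] at hs
    simp only [hp (show 0 ≤ τ - s by linarith [hs.2]), ih hs.1]

theorem renewalDensity_congr {p p' u0 u0' : ℝ → ℝ} (hp : EqOn p p' (Ici 0))
    (hu : EqOn u0 u0' (Ici 0)) :
    EqOn (renewalDensity p u0) (renewalDensity p' u0') (Ici 0) := fun _ hτ =>
  tsum_congr fun i => renewalTerm_congr hp hu i hτ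

section Renewal

variable {P U : ℝ → ℝ}

theorem norm_renewalTerm_le {T M C : ℝ} (hC : 0 ≤ C) (hU : ∀ t ∈ Icc 0 T, ‖U t‖ ≤ M)
    (hP : ∀ t ∈ Icc 0 T, ‖P t‖ ≤ C) (i : ℕ) {τ : ℝ} (hτ : τ ∈ Icc 0 T) :
    ‖renewalTerm P U i τ‖ ≤ M * (C * τ) ^ i / i ! := by
  induction i generalizing τ with
  | zero => simpa [renewalTerm] using hU τ hτ
  | succ i ih =>
    have hbound : ∀ s ∈ Ioc 0 τ, ‖P (τ - s) * renewalTerm P U i s‖ ≤ C * (M * (C * s) ^ i / i !) :=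
      fun s hs => by
        rw [norm_mul]
        exact mul_le_mul (hP _ ⟨by linarith [hs.2], by linarith [hs.1, hτ.2]⟩)
          (ih ⟨hs.1.le, hs.2.trans hτ.2⟩) (norm_nonneg _) hC
    calc ‖renewalTerm P U (i + 1) τ‖
        ≤ ∫ s in 0..τ, C * (M * (C * s) ^ i / i !) :=
          intervalIntegral.norm_integral_le_of_norm_le hτ.1
            (Eventually.of_forall hbound) (Continuous.intervalIntegrable (by fun_prop) _ _)
      _ = M * (C * τ) ^ (i + 1) / (i + 1)! := by
          simp_rw [mul_pow, show ∀ s : ℝ, C * (M * (C ^ i * s ^ i) / i !) =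
            C * M * C ^ i / i ! * s ^ i from fun s => by ring]
          rw [intervalIntegral.integral_const_mul, integral_pow, Nat.factorial_succ]
          push_cast
          field_simp
          ring

theorem continuous_renewalTerm (hP : Continuous P) (hU : Continuous U) (i : ℕ) :
    Continuous (renewalTerm P U i) := by
  induction i with
  | zero => exact hU
  | succ i ih =>
    exact intervalIntegral.continuous_parametric_intervalIntegral_of_continuous
      (by fun_prop : Continuous fun z : ℝ × ℝ => P (z.1 - z.2) * renewalTerm P U i z.2)
      continuous_id

theorem exists_summable_bound_renewalTerm (hP : Continuous P) (hU : Continuous U) (T : ℝ) :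
    ∃ K : ℕ → ℝ, Summable K ∧ ∀ i, ∀ τ ∈ Icc 0 T, ‖renewalTerm P U i τ‖ ≤ K i := by
  obtain ⟨M, hM⟩ := (isCompact_Icc (a := 0) (b := T)).exists_bound_of_continuousOn hU.continuousOn
  obtain ⟨C, hC⟩ := (isCompact_Icc (a := 0) (b := T)).exists_bound_of_continuousOn hP.continuousOn
  have hC0 : 0 ≤ max C 0 := le_max_right _ _
  refine ⟨fun i => max M 0 * (max C 0 * T) ^ i / i !,
    (Real.summable_pow_div_factorial (max C 0 * T)).mul_left (max M 0) |>.congr fun i => by ring,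
    fun i τ hτ => ?_⟩
  calc ‖renewalTerm P U i τ‖ ≤ max M 0 * (max C 0 * τ) ^ i / i ! :=
        norm_renewalTerm_le hC0 (fun t ht => (hM t ht).trans (le_max_left _ _))
          (fun t ht => (hC t ht).trans (le_max_left _ _)) i hτ
    _ ≤ max M 0 * (max C 0 * T) ^ i / i ! := by
        gcongr
        exacts [mul_nonneg hC0 hτ.1, hτ.2]

theorem summable_renewalTerm (hP : Continuous P) (hU : Continuous U) {τ : ℝ} (hτ : 0 ≤ τ) :
    Summable fun i => renewalTerm P U i τ := by
  obtain ⟨K, hK, hbound⟩ := exists_summable_bound_renewalTerm hP hU τ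
  exact hK.of_norm_bounded fun i => hbound i τ ⟨hτ, le_rfl⟩

theorem continuousOn_renewalDensity (hP : Continuous P) (hU : Continuous U) (T : ℝ) :
    ContinuousOn (renewalDensity P U) (Icc 0 T) := by
  obtain ⟨K, hK, hbound⟩ := exists_summable_bound_renewalTerm hP hU T
  exact continuousOn_tsum (fun i => (continuous_renewalTerm hP hU i).continuousOn) hK hbound

theorem renewalDensity_eq (hP : Continuous P) (hU : Continuous U) {t : ℝ} (ht : 0 ≤ t) :
    renewalDensity P U t = U t + ∫ s in 0..t, P (t - s) * renewalDensity P U s := by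
  obtain ⟨K, hK, hbound⟩ := exists_summable_bound_renewalTerm hP hU t
  have hterms : HasSum (fun i => renewalTerm P U (i + 1) t)
      (∫ s in 0..t, P (t - s) * renewalDensity P U s) := by
    refine intervalIntegral.hasSum_integral_of_dominated_convergence
      (fun i s => ‖P (t - s)‖ * K i)
      (fun i => (hP.comp (continuous_const.sub continuous_id)).mul
        (continuous_renewalTerm hP hU i) |>.aestronglyMeasurable)
      (fun i => Eventually.of_forall fun s hs => ?_)
      (Eventually.of_forall fun s _ => hK.mul_left _)
      ?_
      (Eventually.of_forall fun s hs => ?_)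
    · rw [uIoc_of_le ht] at hs
      rw [norm_mul]
      exact mul_le_mul_of_nonneg_left (hbound i s ⟨hs.1.le, hs.2⟩) (norm_nonneg _)
    · simp_rw [tsum_mul_left]
      exact Continuous.intervalIntegrable (by fun_prop) _ _
    · rw [uIoc_of_le ht] at hs
      exact (summable_renewalTerm hP hU hs.1.le).hasSum.mul_left _
  exact ((summable_renewalTerm hP hU ht).tsum_eq_zero_add).trans
    (congrArg (U t + ·) hterms.tsum_eq)

end Renewal

theorem setIntegral_Ici_comp_add {E : Type*} [NormedAddCommGroup E] [NormedSpace ℝ E]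
    (g : ℝ → E) (a : ℝ) : ∫ x in Ici 0, g (x + a) = ∫ y in Ici a, g y := by
  simpa using (measurePreserving_add_right volume a).setIntegral_preimage_emb
    (measurableEmbedding_addRight a) g (Ici a)

theorem integrableOn_Ici_comp_add_iff {E : Type*} [NormedAddCommGroup E] {g : ℝ → E} {a : ℝ} :
    IntegrableOn (fun x => g (x + a)) (Ici 0) ↔ IntegrableOn g (Ici a) := by
  have h := (measurePreserving_add_right volume a).integrableOn_comp_preimage
    (measurableEmbedding_addRight a) (f := g) (s := Ici a)
  rwa [preimage_add_const_Ici, sub_self] at h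

theorem intervalIntegral_integral_swap_triangle {E : Type*} [NormedAddCommGroup E]
    [NormedSpace ℝ E] {a b : ℝ} (hab : a ≤ b) {f : ℝ → ℝ → E}
    (hf : Integrable (Function.uncurry f)
      ((volume.restrict (Ioc a b)).prod (volume.restrict (Ioc a b)))) :
    ∫ t in a..b, ∫ s in a..t, f t s = ∫ s in a..b, ∫ t in s..b, f t s := by
  set g : ℝ → ℝ → E := fun t s => if s ≤ t then f t s else 0
  have hg : Integrable (Function.uncurry g)
      ((volume.restrict (Ioc a b)).prod (volume.restrict (Ioc a b))) := by
    have : Function.uncurry g = {z : ℝ × ℝ | z.2 ≤ z.1}.indicator (Function.uncurry f) := by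
      ext ⟨t, s⟩; simp [g, indicator]
    rw [this]
    exact hf.indicator (measurableSet_le measurable_snd measurable_fst)
  have hleft : ∀ t ∈ Ioc a b, ∫ s in a..t, f t s = ∫ s in Ioc a b, g t s := by
    intro t ht
    have : (fun s => g t s) = (Iic t).indicator (f t) := by ext s; simp [g, indicator]
    rw [this, setIntegral_indicator measurableSet_Iic, intervalIntegral.integral_of_le ht.1.le,
      Ioc_inter_Iic, min_eq_right ht.2]
  have hright : ∀ s ∈ Ioc a b, ∫ t in s..b, f t s = ∫ t in Ioc a b, g t s := by
    intro s hs
    have : (fun t => g t s) = (Ici s).indicator (fun t => f t s) := by ext t; simp [g, indicator]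
    have hinter : Ioc a b ∩ Ici s = Icc s b := by
      ext t
      simp only [mem_inter_iff, mem_Ioc, mem_Ici, mem_Icc]
      exact ⟨fun h => ⟨h.2, h.1.2⟩, fun h => ⟨⟨hs.1.trans_le h.1, h.2⟩, h.1⟩⟩
    rw [this, setIntegral_indicator measurableSet_Ici, hinter, intervalIntegral.integral_of_le hs.2,
      integral_Icc_eq_integral_Ioc]
  rw [intervalIntegral.integral_of_le hab, intervalIntegral.integral_of_le hab,
    setIntegral_congr_fun measurableSet_Ioc hleft, setIntegral_congr_fun measurableSet_Ioc hright]
  exact integral_integral_swap hg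

theorem norm_cexp_neg_mul_ofReal (q : ℂ) (x : ℝ) :
    ‖Complex.exp (-q * x)‖ = Real.exp (-q.re * x) := by
  simp [Complex.norm_exp]

theorem cexp_neg_mul_eq_mul_cexp_neg_mul_add (q : ℂ) (x a : ℝ) :
    Complex.exp (-q * x) = Complex.exp (q * a) * Complex.exp (-q * ↑(x + a)) := by
  rw [← Complex.exp_add]
  push_cast
  ring_nf

noncomputable def truncLaplace (f : ℝ → ℝ) (q : ℂ) (a : ℝ) : ℂ :=
  ∫ y in 0..a, Complex.exp (-q * y) * f y

section Laplace

variable {q : ℂ}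

theorem integrableOn_cexp_neg_mul (hq : 0 < q.re) :
    IntegrableOn (fun x : ℝ => Complex.exp (-q * x)) (Ici 0) := by
  refine Integrable.mono' ((integrableOn_Ici_iff_integrableOn_Ioi).2
    (exp_neg_integrableOn_Ioi 0 hq)) (by fun_prop) (Eventually.of_forall fun x => ?_)
  rw [norm_cexp_neg_mul_ofReal]

theorem integrableOn_laplace_of_integrableOn {f : ℝ → ℝ} (hq : 0 ≤ q.re)
    (hf : IntegrableOn f (Ici 0)) :
    IntegrableOn (fun x : ℝ => Complex.exp (-q * x) * f x) (Ici 0) := by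
  refine hf.ofReal.bdd_mul (c := 1) (by fun_prop) ?_
  filter_upwards [ae_restrict_mem measurableSet_Ici] with x hx
  rw [norm_cexp_neg_mul_ofReal, Real.exp_le_one_iff]
  nlinarith [mem_Ici.1 hx]

theorem integrableOn_laplace_of_bounded {f : ℝ → ℝ} {B : ℝ} (hq : 0 < q.re)
    (hf : AEStronglyMeasurable f (volume.restrict (Ici 0))) (hB : ∀ x, |f x| ≤ B) :
    IntegrableOn (fun x : ℝ => Complex.exp (-q * x) * f x) (Ici 0) := by
  refine (integrableOn_cexp_neg_mul hq).mul_bdd (c := B)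
    (Complex.continuous_ofReal.comp_aestronglyMeasurable hf) (Eventually.of_forall fun x => ?_)
  simpa using hB x

theorem integrableOn_laplace_comp_add {f : ℝ → ℝ} {a : ℝ} (ha : 0 ≤ a)
    (hf : IntegrableOn (fun x : ℝ => Complex.exp (-q * x) * f x) (Ici 0)) :
    IntegrableOn (fun x : ℝ => Complex.exp (-q * x) * f (x + a)) (Ici 0) := by
  have hshift : IntegrableOn (fun x : ℝ => Complex.exp (-q * ↑(x + a)) * f (x + a)) (Ici 0) :=
    integrableOn_Ici_comp_add_iff.2 (hf.mono_set (Ici_subset_Ici.2 ha))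
  refine IntegrableOn.congr_fun (hshift.const_mul (Complex.exp (q * a))) (fun x _ => ?_)
    measurableSet_Ici
  rw [cexp_neg_mul_eq_mul_cexp_neg_mul_add q x a, mul_assoc]

theorem laplaceFn_congr {f g : ℝ → ℝ} (h : EqOn f g (Ici 0)) : laplaceFn f q = laplaceFn g q :=
  setIntegral_congr_fun measurableSet_Ici fun x hx => by simp only [h hx]

theorem laplaceFn_add {f g : ℝ → ℝ}
    (hf : IntegrableOn (fun x : ℝ => Complex.exp (-q * x) * f x) (Ici 0))
    (hg : IntegrableOn (fun x : ℝ => Complex.exp (-q * x) * g x) (Ici 0)) :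
    laplaceFn (fun x => f x + g x) q = laplaceFn f q + laplaceFn g q := by
  simp only [laplaceFn, Complex.ofReal_add, mul_add]
  exact integral_add hf hg

theorem laplaceFn_comp_add {f : ℝ → ℝ} {a : ℝ} (ha : 0 ≤ a)
    (hf : IntegrableOn (fun x : ℝ => Complex.exp (-q * x) * f x) (Ici 0)) :
    laplaceFn (fun x => f (x + a)) q =
      Complex.exp (q * a) * (laplaceFn f q - truncLaplace f q a) := by
  have htail : laplaceFn f q - truncLaplace f q a = ∫ y in Ici a, Complex.exp (-q * y) * f y := by
    rw [laplaceFn, truncLaplace, integral_Ici_eq_integral_Ioi, integral_Ici_eq_integral_Ioi,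
      ← intervalIntegral.integral_Ioi_sub_Ioi ((integrableOn_Ici_iff_integrableOn_Ioi).1 hf) ha,
      sub_sub_cancel]
  rw [htail, ← setIntegral_Ici_comp_add, ← integral_const_mul, laplaceFn]
  refine setIntegral_congr_fun measurableSet_Ici fun x _ => ?_
  rw [cexp_neg_mul_eq_mul_cexp_neg_mul_add q x a, mul_assoc]

theorem laplaceFn_convolution_eq {P A : ℝ → ℝ} {B τ : ℝ} (hq : 0 < q.re) (hτ : 0 ≤ τ)
    (hP : Measurable P) (hPB : ∀ x, |P x| ≤ B) (hA : IntervalIntegrable A volume 0 τ) :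
    IntegrableOn (fun x : ℝ =>
      Complex.exp (-q * x) * ((∫ s in 0..τ, P (x + τ - s) * A s : ℝ) : ℂ)) (Ici 0) ∧
    laplaceFn (fun x => ∫ s in 0..τ, P (x + τ - s) * A s) q =
      ∫ s in 0..τ, (A s : ℂ) * laplaceFn (fun x => P (x + (τ - s))) q := by
  have hkernel : Integrable
      (Function.uncurry fun x s : ℝ => Complex.exp (-q * x) * ((P (x + τ - s) * A s : ℝ) : ℂ))
      ((volume.restrict (Ici 0)).prod (volume.restrict (Ioc 0 τ))) := by
    refine Integrable.mono' ((integrableOn_cexp_neg_mul hq).norm.mul_prod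
      (hA.1.norm.const_mul B)) ?_ (Eventually.of_forall fun z => ?_)
    · exact (Continuous.aestronglyMeasurable (by fun_prop)).mul
        (Complex.continuous_ofReal.comp_aestronglyMeasurable
          ((hP.comp (by fun_prop)).aestronglyMeasurable.mul
            hA.1.aestronglyMeasurable.comp_snd))
    · simp only [Function.uncurry, norm_mul, Complex.norm_real, Real.norm_eq_abs]
      gcongr
      exact hPB _
  have hslice : ∀ x : ℝ,
      Complex.exp (-q * x) * ((∫ s in 0..τ, P (x + τ - s) * A s : ℝ) : ℂ) =
        ∫ s in Ioc 0 τ, Complex.exp (-q * x) * ((P (x + τ - s) * A s : ℝ) : ℂ) := fun x => by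
    rw [intervalIntegral.integral_of_le hτ, integral_const_mul, integral_complex_ofReal]
  refine ⟨hkernel.integral_prod_left.congr (Eventually.of_forall fun x => (hslice x).symm), ?_⟩
  rw [laplaceFn, setIntegral_congr_fun measurableSet_Ici (fun x _ => hslice x),
    integral_integral_swap hkernel, intervalIntegral.integral_of_le hτ]
  refine setIntegral_congr_fun measurableSet_Ioc fun s _ => ?_
  rw [laplaceFn, ← integral_const_mul]
  refine integral_congr_ae (Eventually.of_forall fun x => ?_)
  simp only [Complex.ofReal_mul, add_sub_assoc]
  ring

theorem truncLaplace_convolution_eq {P A : ℝ → ℝ} {B τ : ℝ} (hτ : 0 ≤ τ) (hP : Measurable P)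
    (hPB : ∀ x, |P x| ≤ B) (hA : IntervalIntegrable A volume 0 τ) :
    truncLaplace (fun t => ∫ s in 0..t, P (t - s) * A s) q τ =
      ∫ s in 0..τ, Complex.exp (-q * s) * A s * truncLaplace P q (τ - s) := by
  have hkernel : Integrable
      (Function.uncurry fun t s : ℝ => Complex.exp (-q * t) * ((P (t - s) * A s : ℝ) : ℂ))
      ((volume.restrict (Ioc 0 τ)).prod (volume.restrict (Ioc 0 τ))) := by
    have hexp : Integrable (fun t : ℝ => ‖Complex.exp (-q * t)‖) (volume.restrict (Ioc 0 τ)) :=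
      Continuous.integrableOn_Ioc (by fun_prop)
    refine Integrable.mono' (hexp.mul_prod (hA.1.norm.const_mul B)) ?_
      (Eventually.of_forall fun z => ?_)
    · exact (Continuous.aestronglyMeasurable (by fun_prop)).mul
        (Complex.continuous_ofReal.comp_aestronglyMeasurable
          ((hP.comp (measurable_fst.sub measurable_snd)).aestronglyMeasurable.mul
            hA.1.aestronglyMeasurable.comp_snd))
    · simp only [Function.uncurry, norm_mul, Complex.norm_real, Real.norm_eq_abs]
      gcongr
      exact hPB _
  calc truncLaplace (fun t => ∫ s in 0..t, P (t - s) * A s) q τ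
      = ∫ t in 0..τ, ∫ s in 0..t, Complex.exp (-q * t) * ((P (t - s) * A s : ℝ) : ℂ) := by
        simp only [truncLaplace, ← intervalIntegral.integral_ofReal,
          intervalIntegral.integral_const_mul]
    _ = ∫ s in 0..τ, ∫ t in s..τ, Complex.exp (-q * t) * ((P (t - s) * A s : ℝ) : ℂ) :=
        intervalIntegral_integral_swap_triangle hτ hkernel
    _ = _ := by
        refine intervalIntegral.integral_congr fun s _ => ?_
        have hshift := intervalIntegral.integral_comp_sub_right (a := s) (b := τ)
          (fun y : ℝ => Complex.exp (-q * y) * P y) s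
        rw [sub_self] at hshift
        rw [truncLaplace, ← hshift, ← intervalIntegral.integral_const_mul]
        refine intervalIntegral.integral_congr fun t _ => ?_
        have hexp : Complex.exp (-q * t) = Complex.exp (-q * s) * Complex.exp (-q * ↑(t - s)) := by
          rw [← Complex.exp_add]
          push_cast
          ring_nf
        simp only [hexp, Complex.ofReal_mul]
        ring

theorem integral_mul_truncLaplace_of_renewal {P U A : ℝ → ℝ} {B τ : ℝ} (hτ : 0 ≤ τ)
    (hP : Measurable P) (hPB : ∀ x, |P x| ≤ B) (hU : IntervalIntegrable U volume 0 τ)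
    (hA : IntervalIntegrable A volume 0 τ)
    (hrenewal : ∀ t ∈ Icc 0 τ, A t = U t + ∫ s in 0..t, P (t - s) * A s) :
    ∫ s in 0..τ, Complex.exp (q * ↑(τ - s)) * A s * truncLaplace P q (τ - s) =
      (∫ s in 0..τ, Complex.exp (q * ↑(τ - s)) * A s) -
        Complex.exp (q * τ) * truncLaplace U q τ := by
  have hexp_split : ∀ s : ℝ,
      Complex.exp (q * ↑(τ - s)) = Complex.exp (q * τ) * Complex.exp (-q * s) := fun s => by
    rw [← Complex.exp_add]
    push_cast
    ring_nf
  have hexpA : IntervalIntegrable (fun t => Complex.exp (-q * t) * A t) volume 0 τ :=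
    IntervalIntegrable.continuousOn_mul ⟨hA.1.ofReal, hA.2.ofReal⟩ (by fun_prop)
  have hexpU : IntervalIntegrable (fun t => Complex.exp (-q * t) * U t) volume 0 τ :=
    IntervalIntegrable.continuousOn_mul ⟨hU.1.ofReal, hU.2.ofReal⟩ (by fun_prop)
  calc ∫ s in 0..τ, Complex.exp (q * ↑(τ - s)) * A s * truncLaplace P q (τ - s)
      = Complex.exp (q * τ) *
          ∫ s in 0..τ, Complex.exp (-q * s) * A s * truncLaplace P q (τ - s) := by
        rw [← intervalIntegral.integral_const_mul]
        simp only [hexp_split, mul_assoc]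
    _ = Complex.exp (q * τ) * truncLaplace (fun t => ∫ s in 0..t, P (t - s) * A s) q τ := by
        rw [truncLaplace_convolution_eq hτ hP hPB hA]
    _ = Complex.exp (q * τ) *
          ∫ t in 0..τ, (Complex.exp (-q * t) * A t - Complex.exp (-q * t) * U t) := by
        congr 1
        refine intervalIntegral.integral_congr fun t ht => ?_
        rw [uIcc_of_le hτ] at ht
        simp only [eq_sub_of_add_eq' (hrenewal t ht).symm, Complex.ofReal_sub, mul_sub]
    _ = _ := by
        rw [intervalIntegral.integral_sub hexpA hexpU, mul_sub,
          ← intervalIntegral.integral_const_mul]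
        simp only [hexp_split, truncLaplace, mul_assoc]

theorem laplaceFn_renewal_solution {P U A : ℝ → ℝ} {B τ : ℝ} (hq : 0 < q.re) (hτ : 0 ≤ τ)
    (hP : Continuous P) (hPB : ∀ x, |P x| ≤ B) (hU : IntegrableOn U (Ici 0))
    (hA : IntervalIntegrable A volume 0 τ)
    (hrenewal : ∀ t ∈ Icc 0 τ, A t = U t + ∫ s in 0..t, P (t - s) * A s) :
    laplaceFn (fun x => U (x + τ) + ∫ s in 0..τ, P (x + τ - s) * A s) q =
      Complex.exp (q * τ) * laplaceFn U q +
        (laplaceFn P q - 1) * ∫ s in 0..τ, Complex.exp (q * ↑(τ - s)) * A s := by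
  have hUq := integrableOn_laplace_of_integrableOn hq.le hU
  have hPq := integrableOn_laplace_of_bounded hq hP.aestronglyMeasurable hPB
  obtain ⟨hWq, hW⟩ := laplaceFn_convolution_eq hq hτ hP.measurable hPB hA
  have hK : Continuous fun s => truncLaplace P q (τ - s) :=
    intervalIntegral.continuous_parametric_intervalIntegral_of_continuous
      (f := fun _ y : ℝ => Complex.exp (-q * y) * P y) (by fun_prop) (by fun_prop)
  have hexpA : IntervalIntegrable (fun s => Complex.exp (q * ↑(τ - s)) * A s) volume 0 τ :=
    IntervalIntegrable.continuousOn_mul ⟨hA.1.ofReal, hA.2.ofReal⟩ (by fun_prop)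
  have hconv : laplaceFn (fun x => ∫ s in 0..τ, P (x + τ - s) * A s) q =
      laplaceFn P q * (∫ s in 0..τ, Complex.exp (q * ↑(τ - s)) * A s) -
        ∫ s in 0..τ, Complex.exp (q * ↑(τ - s)) * A s * truncLaplace P q (τ - s) := by
    rw [hW, ← intervalIntegral.integral_const_mul,
      ← intervalIntegral.integral_sub (hexpA.const_mul _) (hexpA.mul_continuousOn hK.continuousOn)]
    refine intervalIntegral.integral_congr fun s hs => ?_
    rw [uIcc_of_le hτ] at hs
    simp only [laplaceFn_comp_add (sub_nonneg.2 hs.2) hPq]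
    ring
  rw [laplaceFn_add (integrableOn_laplace_comp_add hτ hUq) hWq, laplaceFn_comp_add hτ hUq, hconv,
    integral_mul_truncLaplace_of_renewal hτ hP.measurable hPB
      ((intervalIntegrable_iff_integrableOn_Ioc_of_le hτ).2
        (hU.mono_set (Ioc_subset_Icc_self.trans Icc_subset_Ici_self))) hA hrenewal]
  ring

end Laplace

theorem eqOn_comp_max_zero (f : ℝ → ℝ) : EqOn (fun x => f (max x 0)) f (Ici 0) :=
  fun x hx => by simp only [max_eq_left (mem_Ici.1 hx)]

theorem ContinuousOn.comp_max_zero {f : ℝ → ℝ} (hf : ContinuousOn f (Ici 0)) :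
    Continuous fun x => f (max x 0) :=
  hf.comp_continuous (by fun_prop) fun x => le_max_right x 0

theorem exists_abs_le_of_continuousOn_Ici_of_tendsto {f : ℝ → ℝ} (hf : ContinuousOn f (Ici 0))
    (hlim : Tendsto f atTop (𝓝 0)) : ∃ B, ∀ x ∈ Ici (0 : ℝ), |f x| ≤ B := by
  obtain ⟨R, hR⟩ := eventually_atTop.1 (hlim.eventually (Metric.closedBall_mem_nhds 0 one_pos))
  obtain ⟨C, hC⟩ := (isCompact_Icc (a := 0) (b := R)).exists_bound_of_continuousOn
    (hf.mono Icc_subset_Ici_self)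
  refine ⟨max C 1, fun x hx => ?_⟩
  rcases le_total x R with h | h
  · exact (hC x ⟨hx, h⟩).trans (le_max_left _ _)
  · exact (mem_closedBall_zero_iff.1 (hR x h)).trans (le_max_right _ _)

theorem stmt7_general (p u0 : ℝ → ℝ) (hp : MemC p)
    (hu0 : MemC u0) (u : ℝ → ℝ → ℝ)
    (hu : ∀ x τ : ℝ, u x τ =
      u0 (x + τ) + ∫ s in (0 : ℝ)..τ, p (x + τ - s) * renewalDensity p u0 s) :
    ∀ q : ℂ, 0 < q.re → ∀ τ : ℝ, 0 ≤ τ →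
      (∫ x in Set.Ici (0 : ℝ), Complex.exp (-q * (x : ℂ)) * (u x τ : ℂ))
        = Complex.exp (q * (τ : ℂ)) * laplaceFn u0 q
          + (laplaceFn p q - 1)
            * ∫ s in (0 : ℝ)..τ,
                Complex.exp (q * ((τ - s : ℝ) : ℂ)) * (renewalDensity p u0 s : ℂ) := by
  intro q hq τ hτ
  set P : ℝ → ℝ := fun x => p (max x 0)
  set U : ℝ → ℝ := fun x => u0 (max x 0)
  have hPc : Continuous P := hp.1.continuousOn.comp_max_zero
  have hUc : Continuous U := hu0.1.continuousOn.comp_max_zero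
  obtain ⟨B, hB⟩ := exists_abs_le_of_continuousOn_Ici_of_tendsto hp.1.continuousOn hp.2.2.2.2
  have hα : EqOn (renewalDensity p u0) (renewalDensity P U) (Ici 0) :=
    renewalDensity_congr (eqOn_comp_max_zero p).symm (eqOn_comp_max_zero u0).symm
  have hsol : EqOn (fun x => u x τ)
      (fun x => U (x + τ) + ∫ s in 0..τ, P (x + τ - s) * renewalDensity P U s) (Ici 0) := by
    intro x (hx : 0 ≤ x)
    refine (hu x τ).trans (congrArg₂ (· + ·) (eqOn_comp_max_zero u0 (add_nonneg hx hτ)).symm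
      (intervalIntegral.integral_congr fun s hs => ?_))
    rw [uIcc_of_le hτ] at hs
    simp only [P, hα hs.1, max_eq_left (show 0 ≤ x + τ - s by linarith [hs.2])]
  have hrenewal_integral : ∫ s in 0..τ, Complex.exp (q * ↑(τ - s)) * renewalDensity p u0 s =
      ∫ s in 0..τ, Complex.exp (q * ↑(τ - s)) * renewalDensity P U s :=
    intervalIntegral.integral_congr fun s hs => by
      simp only [hα (uIcc_of_le hτ ▸ hs).1]
  rw [show (∫ x in Ici (0 : ℝ), Complex.exp (-q * x) * (u x τ : ℂ)) =
      laplaceFn (fun x => u x τ) q from rfl, laplaceFn_congr hsol,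
    laplaceFn_renewal_solution hq hτ hPc (fun x => hB _ (le_max_right x 0))
      (hu0.2.1.congr_fun (eqOn_comp_max_zero u0).symm measurableSet_Ici)
      ((continuousOn_renewalDensity hPc hUc τ).intervalIntegrable_of_Icc hτ)
      (fun t ht => renewalDensity_eq hPc hUc ht.1),
    laplaceFn_congr (eqOn_comp_max_zero p), laplaceFn_congr (eqOn_comp_max_zero u0),
    hrenewal_integral]

/-- For continuous `p ∈ 𝒞`, `u0 ∈ 𝒞`, and the strong solution
`u(x,τ) = u0(x+τ) + ∫_0^τ p(x+τ−s) α(s) ds`, the spatial Laplace transform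
satisfies `û(q,τ) = e^{qτ} û0(q) + (p̂(q) − 1) ∫_0^τ e^{q(τ−s)} α(s) ds`
for every complex `q` with `Re q > 0` and every `τ ≥ 0`. -/
theorem stmt7 (p u0 : ℝ → ℝ) (hp : MemC p) (hpc : ContinuousOn p (Set.Ici 0))
    (hu0 : MemC u0) (u : ℝ → ℝ → ℝ)
    (hu : ∀ x τ : ℝ, u x τ =
      u0 (x + τ) + ∫ s in (0 : ℝ)..τ, p (x + τ - s) * renewalDensity p u0 s) :
    ∀ q : ℂ, 0 < q.re → ∀ τ : ℝ, 0 ≤ τ →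
      (∫ x in Set.Ici (0 : ℝ), Complex.exp (-q * (x : ℂ)) * (u x τ : ℂ))
        = Complex.exp (q * (τ : ℂ)) * laplaceFn u0 q
          + (laplaceFn p q - 1)
            * ∫ s in (0 : ℝ)..τ,
                Complex.exp (q * ((τ - s : ℝ) : ℂ)) * (renewalDensity p u0 s : ℂ) :=
  stmt7_general p u0 hp hu0 u hu
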